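/- If G is a connected graph in class W_2 with G ≠ K_2, then the differential ∂ is monotone on independent sets: if A ⊆ B and B is independent, then |N(A)| − |A| ≤ |N(B)| − |B|. -/

import Mathlib

open Finset

/-- A finset of vertices is independent: no two of its members are adjacent. -/
def IndepSet {V : Type*} (G : SimpleGraph V) (A : Finset V) : Prop :=
  ∀ u ∈ A, ∀ v ∈ A, ¬ G.Adj u v

open scoped Classical in
/-- Maximum size of an independent set contained in `s` (independence number of `G[s]`). -/
noncomputable def alphaOn {V : Type*} [Fintype V] (G : SimpleGraph V) (s : Finset V) : ℕ :=
  ((s.powerset).filter (fun A => IndepSet G A)).sup Finset.card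

/-- The independence number of `G`. -/
noncomputable def alpha {V : Type*} [Fintype V] (G : SimpleGraph V) : ℕ :=
  alphaOn G Finset.univ

/-- The induced subgraph `G[s]` is well-covered: every maximal independent subset of `s`
has maximum cardinality. -/
def WellCoveredOn {V : Type*} [Fintype V] (G : SimpleGraph V) (s : Finset V) : Prop :=
  ∀ A ⊆ s, IndepSet G A →
    (∀ B ⊆ s, IndepSet G B → A ⊆ B → A = B) → A.card = alphaOn G s

/-- `G` is well-covered. -/
def WellCovered {V : Type*} [Fintype V] (G : SimpleGraph V) : Prop :=
  WellCoveredOn G Finset.univ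

open scoped Classical in
/-- The open neighborhood `N(A)`: vertices having a neighbor in `A`. -/
noncomputable def nbhd {V : Type*} [Fintype V] (G : SimpleGraph V) (A : Finset V) : Finset V :=
  Finset.univ.filter (fun v => ∃ u ∈ A, G.Adj u v)

/-- The closed neighborhood `N[A] = A ∪ N(A)`. -/
noncomputable def closedNbhd {V : Type*} [Fintype V] [DecidableEq V] (G : SimpleGraph V) (A : Finset V) :
    Finset V :=
  A ∪ nbhd G A

/-- The induced subgraph `G[s]` is in class `W₂`: every two disjoint independent subsets of `s`
extend to two disjoint maximum independent subsets of `s`. -/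
def W2On {V : Type*} [Fintype V] (G : SimpleGraph V) (s : Finset V) : Prop :=
  ∀ A ⊆ s, ∀ B ⊆ s, IndepSet G A → IndepSet G B → Disjoint A B →
    ∃ S₁ ⊆ s, ∃ S₂ ⊆ s, IndepSet G S₁ ∧ IndepSet G S₂ ∧
      S₁.card = alphaOn G s ∧ S₂.card = alphaOn G s ∧ Disjoint S₁ S₂ ∧ A ⊆ S₁ ∧ B ⊆ S₂

/-- `G` belongs to class `W₂`. -/
def W2 {V : Type*} [Fintype V] (G : SimpleGraph V) : Prop :=
  W2On G Finset.univ

/-!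
In a `W₂` graph, take an independent set `A` and a vertex `v ∉ A`. Extending the disjoint sets
`{v}` and `A` to disjoint maximum independent sets `S₁ ∋ v` and `S₂ ⊇ A`, maximality of `S₂`
forces `v` to have a neighbour `w ∈ S₂`; as `S₂` is independent, `w` has no neighbour in `A`.
So adding `v` to `A` enlarges `N(A)` by at least the new vertex `w`, and the differential
cannot drop. Adding the vertices of `B \ A` one at a time gives monotonicity.
-/

namespace IndepSet

variable {V : Type*} {G : SimpleGraph V} {A B : Finset V}

theorem mono (hB : IndepSet G B) (hAB : A ⊆ B) : IndepSet G A :=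
  fun u hu v hv => hB u (hAB hu) v (hAB hv)

theorem insert [DecidableEq V] {v : V} (hA : IndepSet G A) (hv : ∀ a ∈ A, ¬ G.Adj v a) :
    IndepSet G (insert v A) := by
  intro a ha b hb hab
  rw [Finset.mem_insert] at ha hb
  rcases ha with rfl | ha <;> rcases hb with rfl | hb
  exacts [G.loopless.irrefl _ hab, hv _ hb hab, hv _ ha hab.symm, hA _ ha _ hb hab]

theorem card_le_alphaOn [Fintype V] {s : Finset V} (hA : IndepSet G A) (hAs : A ⊆ s) :
    A.card ≤ alphaOn G s := by
  classical
  exact Finset.le_sup (f := Finset.card) (Finset.mem_filter.mpr ⟨Finset.mem_powerset.mpr hAs, hA⟩)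

end IndepSet

theorem indepSet_singleton {V : Type*} (G : SimpleGraph V) (v : V) : IndepSet G {v} := by
  simp [IndepSet]

section Neighborhood

variable {V : Type*} [Fintype V] {G : SimpleGraph V} {A B : Finset V}

@[simp]
theorem mem_nbhd {v : V} : v ∈ nbhd G A ↔ ∃ u ∈ A, G.Adj u v := by
  simp [nbhd]

theorem nbhd_mono (hAB : A ⊆ B) : nbhd G A ⊆ nbhd G B := by
  intro v hv
  obtain ⟨u, hu, huv⟩ := mem_nbhd.mp hv
  exact mem_nbhd.mpr ⟨u, hAB hu, huv⟩

noncomputable def differential (G : SimpleGraph V) (A : Finset V) : ℤ :=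
  (nbhd G A).card - A.card

end Neighborhood

section W2

variable {V : Type*} [Fintype V] {G : SimpleGraph V} {A : Finset V} {v : V}

theorem W2On.exists_adj_notMem_nbhd {s : Finset V} (hG : W2On G s) (hAs : A ⊆ s)
    (hA : IndepSet G A) (hvs : v ∈ s) (hvA : v ∉ A) : ∃ w, G.Adj v w ∧ w ∉ nbhd G A := by
  classical
  obtain ⟨S₁, -, S₂, hS₂s, -, hS₂, -, hS₂card, hdisj, hvS₁, hAS₂⟩ :=
    hG {v} (Finset.singleton_subset_iff.mpr hvs) A hAs (indepSet_singleton G v) hA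
      (Finset.disjoint_singleton_left.mpr hvA)
  have hvS₂ : v ∉ S₂ := Finset.disjoint_left.mp hdisj (hvS₁ (Finset.mem_singleton_self v))
  have hw : ∃ w ∈ S₂, G.Adj v w := by
    by_contra! hno
    have := (hS₂.insert hno).card_le_alphaOn (Finset.insert_subset hvs hS₂s)
    rw [Finset.card_insert_of_notMem hvS₂, hS₂card] at this
    omega
  obtain ⟨w, hwS₂, hvw⟩ := hw
  refine ⟨w, hvw, fun hwA => ?_⟩
  obtain ⟨a, haA, haw⟩ := mem_nbhd.mp hwA
  exact hS₂ a (hAS₂ haA) w hwS₂ haw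

theorem W2.card_nbhd_lt_card_nbhd_insert [DecidableEq V] (hG : W2 G) (hA : IndepSet G A)
    (hvA : v ∉ A) : (nbhd G A).card < (nbhd G (insert v A)).card := by
  obtain ⟨w, hvw, hwA⟩ :=
    W2On.exists_adj_notMem_nbhd (s := Finset.univ) hG (Finset.subset_univ A) hA
      (Finset.mem_univ v) hvA
  refine Finset.card_lt_card ⟨nbhd_mono (Finset.subset_insert v A), fun h => hwA (h ?_)⟩
  exact mem_nbhd.mpr ⟨v, Finset.mem_insert_self v A, hvw⟩

theorem W2.differential_le_differential_insert [DecidableEq V] (hG : W2 G) (hA : IndepSet G A)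
    (hvA : v ∉ A) : differential G A ≤ differential G (insert v A) := by
  have := hG.card_nbhd_lt_card_nbhd_insert hA hvA
  rw [differential, differential, Finset.card_insert_of_notMem hvA]
  omega

theorem W2.differential_mono (hG : W2 G) {B : Finset V} (hAB : A ⊆ B) (hB : IndepSet G B) :
    differential G A ≤ differential G B := by
  classical
  suffices ∀ C ⊆ B \ A, differential G A ≤ differential G (A ∪ C) by
    simpa [Finset.union_sdiff_of_subset hAB] using this (B \ A) le_rfl
  intro C hC
  induction C using Finset.induction_on with
  | empty => simp
  | insert v C hvC ih =>
    obtain ⟨hv, hC⟩ := Finset.insert_subset_iff.mp hC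
    have hvAC : v ∉ A ∪ C := by
      simp only [Finset.mem_union, not_or]
      exact ⟨(Finset.mem_sdiff.mp hv).2, hvC⟩
    have hAC : IndepSet G (A ∪ C) :=
      hB.mono (Finset.union_subset hAB (hC.trans Finset.sdiff_subset))
    rw [Finset.union_insert]
    exact (ih hC).trans (hG.differential_le_differential_insert hAC hvAC)

end W2

theorem stmt9_general {V : Type*} [Fintype V] (G : SimpleGraph V)
    (h : W2 G) :
    ∀ A B : Finset V, A ⊆ B → IndepSet G B →
      ((nbhd G A).card : ℤ) - (A.card : ℤ) ≤ ((nbhd G B).card : ℤ) - (B.card : ℤ) :=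
  fun _ _ hAB hB => h.differential_mono hAB hB

/-- In a connected W₂ graph other than K₂, the differential ∂(A) = |N(A)| - |A| is
monotone over independent sets. -/
theorem stmt9 {V : Type*} [Fintype V] (G : SimpleGraph V)
    (hconn : G.Connected) (hK2 : ¬ Nonempty (G ≃g (⊤ : SimpleGraph (Fin 2))))
    (h : W2 G) :
    ∀ A B : Finset V, A ⊆ B → IndepSet G B →
      ((nbhd G A).card : ℤ) - (A.card : ℤ) ≤ ((nbhd G B).card : ℤ) - (B.card : ℤ) :=
  stmt9_general G h
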